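/- Let p ≥ 0 and m ≥ 0 be integers. Then the function τ ↦ ((1−τ)/2)^p ((1+τ)/2)^p · P_m^{(p,p)}(τ) solves the ODE (1−τ²) a''(τ) + 2(p−1)τ a'(τ) + (2p+m)(m+1) a(τ) = 0 on (−1,1). -/

import Mathlib

/-- The generalized binomial coefficient `C(y, k) = (∏_{i=0}^{k−1}(y−i)) / k!`
for real `y` and natural `k`. -/
noncomputable def genBinom (y : ℝ) (k : ℕ) : ℝ :=
  (∏ i ∈ Finset.range k, (y - (i : ℝ))) / (Nat.factorial k : ℝ)

/-- The Jacobi polynomial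
`P_n^{(α,β)}(x) = Σ_{l=0}^{n} C(n+α, l) C(n+β, n−l) ((x−1)/2)^{n−l} ((x+1)/2)^l`. -/
noncomputable def jacobiP (n : ℕ) (α β : ℝ) (x : ℝ) : ℝ :=
  ∑ l ∈ Finset.range (n + 1),
    genBinom ((n : ℝ) + α) l * genBinom ((n : ℝ) + β) (n - l) *
      ((x - 1) / 2) ^ (n - l) * ((x + 1) / 2) ^ l

/-!
In the variables `u = (τ - 1)/2`, `v = (τ + 1)/2` one has `1 - τ² = -4uv` and `τ = u + v`, and
the operator `L = (1 - τ²) D² + 2(P - 1) τ D + n(n + 1 - 2P)` sends a monomial `u^j v^k` of degree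
`j + k = n` to `j(P - j) (u^(j-1) v^(k+1) - u^j v^k) + k(P - k) (u^(j+1) v^(k-1) - u^j v^k)`.
Up to the sign `(-1)^p`, the function `a` is `∑ c_l u^(p+m-l) v^(p+l)` with
`c_l = C(m+p, l) C(m+p, m-l)`, and the recurrence `c_(l+1) (l+1)(p+l+1) = c_l (m-l)(p+m-l)`
makes the resulting differences cancel in pairs.
-/

open Polynomial Finset

lemma genBinom_natCast (n k : ℕ) : genBinom n k = n.choose k := by
  rw [genBinom, Nat.cast_choose_eq_descPochhammer_div, descPochhammer_eval_eq_prod_range]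

lemma sum_range_succ_add_eq_zero_of_cancel {M : Type*} [AddCommGroup M] (x y : ℕ → M) (m : ℕ)
    (hy : y 0 = 0) (hxy : ∀ l < m, y (l + 1) = -x l) (hx : x m = 0) :
    ∑ l ∈ range (m + 1), (x l + y l) = 0 := by
  rw [sum_add_distrib, sum_range_succ, sum_range_succ', hx, hy, add_zero, add_zero,
    ← sum_add_distrib]
  exact sum_eq_zero fun l hl => by rw [hxy l (mem_range.1 hl), add_neg_cancel]

noncomputable def jacobiOp (P K : ℝ) : ℝ[X] →ₗ[ℝ] ℝ[X] where
  toFun q :=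
    (1 - X ^ 2) * derivative (derivative q) + C (2 * (P - 1)) * X * derivative q + C K * q
  map_add' q r := by simp only [map_add]; ring
  map_smul' c q := by simp only [smul_eq_C_mul, derivative_C_mul, RingHom.id_apply]; ring

lemma eval_jacobiOp (P K : ℝ) (q : ℝ[X]) (τ : ℝ) :
    (jacobiOp P K q).eval τ = (1 - τ ^ 2) * deriv (deriv fun x => q.eval x) τ
      + 2 * (P - 1) * τ * deriv (fun x => q.eval x) τ + K * q.eval τ := by
  have hq : deriv (fun x => q.eval x) = fun x => q.derivative.eval x := funext fun _ => q.deriv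
  simp [jacobiOp, hq, Polynomial.deriv]

noncomputable def jacobiMonomial (j k : ℕ) : ℝ[X] :=
  (C 2⁻¹ * (X - 1)) ^ j * (C 2⁻¹ * (X + 1)) ^ k

lemma jacobiOp_jacobiMonomial (P K : ℝ) (j k : ℕ) (hK : K = (j + k) * (j + k + 1 - 2 * P)) :
    jacobiOp P K (jacobiMonomial j k) =
      (j * (P - j)) • (jacobiMonomial (j - 1) (k + 1) - jacobiMonomial j k)
        + (k * (P - k)) • (jacobiMonomial (j + 1) (k - 1) - jacobiMonomial j k) := by
  subst hK
  refine Polynomial.funext fun x => ?_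
  rcases j with _ | _ | j <;> rcases k with _ | _ | k <;>
    simp [jacobiOp, jacobiMonomial, derivative_mul, derivative_pow] <;> ring

def jacobiCoeff (p m l : ℕ) : ℕ := (m + p).choose l * (m + p).choose (m - l)

lemma jacobiCoeff_succ_mul {p m l : ℕ} (hl : l < m) :
    jacobiCoeff p m (l + 1) * ((p + l + 1) * (l + 1))
      = jacobiCoeff p m l * ((p + (m - l)) * (m - l)) := by
  have h₁ := Nat.choose_succ_right_eq (m + p) l
  have h₂ := Nat.choose_succ_right_eq (m + p) (m - (l + 1))
  rw [show m - (l + 1) + 1 = m - l by omega, show m + p - (m - (l + 1)) = p + l + 1 by omega] at h₂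
  rw [show m + p - l = p + (m - l) by omega] at h₁
  calc jacobiCoeff p m (l + 1) * ((p + l + 1) * (l + 1))
      = ((m + p).choose (l + 1) * (l + 1)) * ((m + p).choose (m - (l + 1)) * (p + l + 1)) := by
        rw [jacobiCoeff]; ring
    _ = jacobiCoeff p m l * ((p + (m - l)) * (m - l)) := by rw [h₁, ← h₂, jacobiCoeff]; ring

noncomputable def weightedJacobiPoly (p m : ℕ) : ℝ[X] :=
  ∑ l ∈ range (m + 1), (jacobiCoeff p m l : ℝ) • jacobiMonomial (p + (m - l)) (p + l)

theorem jacobiOp_weightedJacobiPoly (p m : ℕ) :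
    jacobiOp p ((2 * p + m) * (m + 1)) (weightedJacobiPoly p m) = 0 := by
  set c : ℕ → ℝ := fun l => jacobiCoeff p m l
  set w : ℕ → ℝ := fun n => n * (p - n)
  set E : ℕ → ℝ[X] := fun l => jacobiMonomial (p + (m - l)) (p + l)
  rw [weightedJacobiPoly, map_sum]
  refine (sum_congr rfl fun l hl => ?_).trans (sum_range_succ_add_eq_zero_of_cancel
    (fun l => (c l * w (p + (m - l))) • (jacobiMonomial (p + (m - l) - 1) (p + l + 1) - E l))
    (fun l => (c l * w (p + l)) • (jacobiMonomial (p + (m - l) + 1) (p + l - 1) - E l)) m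
    (by simp [w]) (fun l hl => ?_) (by simp [w]))
  · have hjk : p + (m - l) + (p + l) = 2 * p + m := by have := mem_range.1 hl; omega
    rw [map_smul, jacobiOp_jacobiMonomial p _ _ _ (by rw [← Nat.cast_add, hjk]; push_cast; ring),
      smul_add, smul_smul, smul_smul]
  · have hc : c (l + 1) * w (p + (l + 1)) = c l * w (p + (m - l)) := by
      have := congrArg (Nat.cast (R := ℝ)) (jacobiCoeff_succ_mul (p := p) hl)
      simp only [c, w]
      push_cast [Nat.cast_sub hl.le] at this ⊢
      linear_combination -this
    rw [hc, show p + (m - (l + 1)) + 1 = p + (m - l) by omega,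
      show p + (l + 1) - 1 = p + l by omega, show p + (m - l) - 1 = p + (m - (l + 1)) by omega,
      ← smul_neg, neg_sub]
    rfl

lemma weight_mul_jacobiP (p m : ℕ) (τ : ℝ) :
    ((1 - τ) / 2) ^ p * ((1 + τ) / 2) ^ p * jacobiP m p p τ
      = (-1) ^ p * (weightedJacobiPoly p m).eval τ := by
  rw [show (1 - τ) / 2 = -1 * ((τ - 1) / 2) by ring, mul_pow]
  simp only [jacobiP, weightedJacobiPoly, eval_finsetSum, eval_smul, mul_sum, ← Nat.cast_add,
    genBinom_natCast, jacobiMonomial, eval_mul, eval_pow, eval_C, eval_sub, eval_add, eval_X,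
    eval_one, smul_eq_mul, jacobiCoeff]
  refine sum_congr rfl fun l _ => ?_
  push_cast
  ring

/-- The function `τ ↦ ((1−τ)/2)^p ((1+τ)/2)^p P_m^{(p,p)}(τ)` solves the Jacobi-type ODE
`(1−τ²)a'' + 2(p−1)τ a' + (2p+m)(m+1) a = 0` on `(−1,1)`. -/
theorem stmt12 (p m : ℕ) :
    let a : ℝ → ℝ := fun τ => ((1 - τ) / 2) ^ p * ((1 + τ) / 2) ^ p * jacobiP m (p : ℝ) (p : ℝ) τ
    ∀ τ ∈ Set.Ioo (-1 : ℝ) 1,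
      (1 - τ ^ 2) * deriv (deriv a) τ + 2 * ((p : ℝ) - 1) * τ * deriv a τ
        + (2 * (p : ℝ) + (m : ℝ)) * ((m : ℝ) + 1) * a τ = 0 := by
  intro a τ _
  have ha : a = fun x => ((-1 : ℝ) ^ p • weightedJacobiPoly p m).eval x :=
    funext fun x => by rw [eval_smul, smul_eq_mul, ← weight_mul_jacobiP]
  have hode := eval_jacobiOp p ((2 * p + m) * (m + 1)) ((-1 : ℝ) ^ p • weightedJacobiPoly p m) τ
  rw [map_smul, jacobiOp_weightedJacobiPoly, smul_zero, eval_zero] at hode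
  rw [ha]
  exact hode.symm
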